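/- Let f ∈ ℤ[X] be 2-permutational. Then f is transitive mod 2ⁿ for every n ≥ 1 if and only if for every n ≥ 0 the sum over all words w of length n over {0,1} of the constant coefficient of the iterated section f|_w is odd. -/
import Mathlib


open Polynomial

/-- The section of `f ∈ ℤ[X]` at a first-level vertex `x₀ ∈ {0, …, d-1}`:
`f|_{x₀}(X) = (f(x₀) div d) + ∑_{i=1}^{t} (f^{(i)}(x₀)/i!) d^{i-1} X^i`, where
`f^{(i)}/i!` is the `i`-th Hasse derivative and `div` is the quotient in division
with remainder in `{0, …, d-1}` (Euclidean division). -/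
noncomputable def psection (d : ℤ) (f : ℤ[X]) (x₀ : ℤ) : ℤ[X] :=
  C ((f.eval x₀).ediv d) +
    ∑ i ∈ Finset.Icc 1 f.natDegree, C ((Polynomial.hasseDeriv i f).eval x₀ * d ^ (i - 1)) * X ^ i

/-- Iterated section of `f` along a word `w = x₁ … x_n`: `f|_w = (…(f|_{x₁})|_{x₂} …)|_{x_n}`. -/
noncomputable def itSection (d : ℤ) (f : ℤ[X]) (w : List ℤ) : ℤ[X] :=
  w.foldl (psection d) f

/-- A polynomial `f ∈ ℤ[X]` is `2`-permutational if for every `n ≥ 1` the induced map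
`ZMod (2 ^ n) → ZMod (2 ^ n)` is a bijection. -/
def Permutational2 (f : ℤ[X]) : Prop :=
  ∀ n : ℕ, 1 ≤ n → Function.Bijective (fun x : ZMod (2 ^ n) => aeval x f)

/-- `f` is transitive mod `m`: the induced map on `ZMod m` has a single orbit. -/
def TransitiveMod (f : ℤ[X]) (m : ℕ) : Prop :=
  ∀ x y : ZMod m, ∃ k : ℕ, (fun z : ZMod m => aeval z f)^[k] x = y


lemma ediv_eq (a b : ℤ) : a.ediv b = a / b := rfl

lemma taylorSum (f : ℤ[X]) (x t : ℤ) :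
    f.eval (x + t) = ∑ i ∈ Finset.range (f.natDegree+1), (hasseDeriv i f).eval x * t^i := by
  rw [show x + t = t + x by ring, ← taylor_eval x f t,
    eval_eq_sum_range' (by rw [natDegree_taylor]; omega : (taylor x f).natDegree < f.natDegree + 1)]
  exact Finset.sum_congr rfl fun i _ => by rw [taylor_coeff]

lemma ar1 (r G m : ℤ) (hm : 0 < m) (hr0 : 0 ≤ r) (hr2 : r < 2) :
    (r + 2*G) % (2*m) = r + 2*(G % m) := by
  have h1 : (2:ℤ)*(G % m) ≡ 2*G [ZMOD 2*m] :=
    Int.ModEq.mul_left' (Int.emod_emod_of_dvd G dvd_rfl)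
  have h2 : (r + 2*G) % (2*m) = (r + 2*(G % m)) % (2*m) := (Int.ModEq.add_left r h1).symm
  have h3 : (r + 2*(G % m)) % (2*m) = r + 2*(G % m) := by
    have := Int.emod_nonneg G (by omega : m ≠ 0)
    have := Int.emod_lt_of_pos G hm
    exact Int.emod_eq_of_lt (by omega) (by omega)
  rw [h2, h3]

lemma psectionEval (f : ℤ[X]) (x y : ℤ) :
    f.eval (x + 2*y) = (f.eval x) % 2 + 2 * (psection 2 f x).eval y := by
  rw [taylorSum f x (2*y), Finset.sum_range_succ']
  have h0 : (hasseDeriv 0 f).eval x * (2*y)^0 = f.eval x % 2 + 2 * ((f.eval x) / 2) := by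
    simp [hasseDeriv_zero]
    omega
  rw [h0]
  have h1 : (psection 2 f x).eval y
      = (f.eval x) / 2 + ∑ i ∈ Finset.Icc 1 f.natDegree,
          (hasseDeriv i f).eval x * 2^(i-1) * y^i := by
    simp [psection, eval_finset_sum, ediv_eq]
  have hIcc : ∑ i ∈ Finset.Icc 1 f.natDegree, (hasseDeriv i f).eval x * 2^(i-1) * y^i
      = ∑ k ∈ Finset.range f.natDegree, (hasseDeriv (1+k) f).eval x * 2^((1+k)-1) * y^(1+k) := by
    rw [← Finset.Ico_add_one_right_eq_Icc, Finset.sum_Ico_eq_sum_range]; simp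
  rw [h1, hIcc]
  have h2 : ∀ i ∈ Finset.range f.natDegree,
      (hasseDeriv (i+1) f).eval x * (2*y)^(i+1)
      = 2 * ((hasseDeriv (1+i) f).eval x * 2^((1+i)-1) * y^(1+i)) := by
    intro i _
    rw [show 1+i = i+1 by ring, Nat.add_sub_cancel, mul_pow]
    ring
  rw [Finset.sum_congr rfl h2, ← Finset.mul_sum]
  ring

def listVal : List ℤ → ℤ
  | [] => 0
  | x :: w => x + 2 * listVal w

def dig : ℕ → ℤ → List ℤ
  | 0, _ => []
  | n+1, a => a % 2 :: dig n (a / 2)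

lemma itSection_cons (d : ℤ) (f : ℤ[X]) (x : ℤ) (w : List ℤ) :
    itSection d f (x :: w) = itSection d (psection d f x) w := rfl

lemma itSectionEval (w : List ℤ) : ∀ (f : ℤ[X]) (y : ℤ),
    f.eval (listVal w + 2^(w.length) * y)
      = (f.eval (listVal w)) % 2^(w.length) + 2^(w.length) * ((itSection 2 f w).eval y) := by
  induction w with
  | nil => intro f y; simp [listVal, itSection]
  | cons x w ih =>
    intro f y
    have e1 : listVal (x :: w) + 2^((x::w).length) * y
        = x + 2*(listVal w + 2^(w.length) * y) := by
      simp [listVal, List.length_cons]; ring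
    rw [e1, psectionEval, ih (psection 2 f x) y, itSection_cons]
    have e2 : f.eval (listVal (x :: w)) % 2^((x::w).length)
        = f.eval x % 2 + 2 * ((psection 2 f x).eval (listVal w) % 2^(w.length)) := by
      have e3 : f.eval (listVal (x :: w)) = f.eval x % 2 + 2 * (psection 2 f x).eval (listVal w) := by
        rw [show listVal (x :: w) = x + 2 * listVal w from rfl, psectionEval]
      rw [e3, List.length_cons, pow_succ, mul_comm ((2:ℤ)^w.length) 2]
      exact ar1 _ _ _ (by positivity) (Int.emod_nonneg _ (by norm_num)) (Int.emod_lt_of_pos _ (by norm_num))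
    rw [e2, List.length_cons, pow_succ]
    ring

lemma emodSplit (n : ℕ) (a : ℤ) : a % (2*2^n) = a%2 + 2*((a/2) % 2^n) := by
  conv_lhs => rw [show a = a%2 + 2*(a/2) by omega]
  exact ar1 _ _ _ (by positivity) (Int.emod_nonneg _ (by norm_num)) (Int.emod_lt_of_pos _ (by norm_num))

lemma digLen (n : ℕ) (a : ℤ) : (dig n a).length = n := by
  induction n generalizing a with
  | zero => rfl
  | succ n ih => simp [dig, ih]

lemma valDig (n : ℕ) (a : ℤ) : listVal (dig n a) = a % 2^n := by
  induction n generalizing a with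
  | zero => simp [dig, listVal]
  | succ n ih =>
    rw [show dig (n+1) a = a % 2 :: dig n (a/2) from rfl,
      show listVal (a % 2 :: dig n (a/2)) = a%2 + 2 * listVal (dig n (a/2)) from rfl,
      ih, pow_succ, mul_comm ((2:ℤ)^n) 2, emodSplit]

lemma digVal (w : List ℤ) (hw : ∀ x ∈ w, x = 0 ∨ x = 1) : dig w.length (listVal w) = w := by
  induction w with
  | nil => rfl
  | cons x w ih =>
    have hx : x = 0 ∨ x = 1 := hw x (by simp)
    have h1 : (x + 2*listVal w) % 2 = x := by omega
    have h2 : (x + 2*listVal w) / 2 = listVal w := by omega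
    rw [List.length_cons, show listVal (x::w) = x + 2*listVal w from rfl,
      show dig (w.length+1) (x + 2*listVal w) = (x + 2*listVal w) % 2 :: dig w.length ((x + 2*listVal w)/2) from rfl,
      h1, h2, ih (fun y hy => hw y (by simp [hy]))]

lemma digCongr (n : ℕ) (a b : ℤ) (h : a % 2^n = b % 2^n) : dig n a = dig n b := by
  induction n generalizing a b with
  | zero => rfl
  | succ n ih =>
    have ha := emodSplit n a
    have hb := emodSplit n b
    rw [pow_succ, mul_comm ((2:ℤ)^n) 2] at h
    have h2n : (0:ℤ) < 2^n := by positivity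
    have hma := Int.emod_nonneg (a/2) (by omega : (2:ℤ)^n ≠ 0)
    have hma2 := Int.emod_lt_of_pos (a/2) h2n
    have hmb := Int.emod_nonneg (b/2) (by omega : (2:ℤ)^n ≠ 0)
    have hmb2 := Int.emod_lt_of_pos (b/2) h2n
    have e1 : a % 2 = b % 2 := by omega
    have e2 : (a/2) % 2^n = (b/2) % 2^n := by omega
    show a % 2 :: dig n (a/2) = b % 2 :: dig n (b/2)
    rw [e1, ih _ _ e2]


section Cyc
variable {α : Type*} [Fintype α] [DecidableEq α] {F : α → α}

lemma periodBound {x₀ : α} {p : ℕ} (hp : 0 < p) (hper : F^[p] x₀ = x₀)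
    (hsurj : ∀ y, ∃ k, F^[k] x₀ = y) : Fintype.card α ≤ p := by
  have key : ∀ k, F^[k] x₀ = F^[k % p] x₀ := by
    intro k
    conv_lhs => rw [show k = k % p + p * (k / p) from by rw [Nat.mod_add_div]]
    rw [Function.iterate_add_apply, Function.iterate_mul]
    rw [Function.iterate_fixed hper]
  have hsub : (Finset.univ : Finset α) ⊆ Finset.image (fun r : Fin p => F^[(r:ℕ)] x₀) Finset.univ := by
    intro y _
    obtain ⟨k, hk⟩ := hsurj y
    refine Finset.mem_image.mpr ⟨⟨k % p, Nat.mod_lt _ hp⟩, Finset.mem_univ _, ?_⟩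
    rw [← key k, hk]
  calc Fintype.card α = (Finset.univ : Finset α).card := (Finset.card_univ).symm
    _ ≤ (Finset.image (fun r : Fin p => F^[(r:ℕ)] x₀) Finset.univ).card := Finset.card_le_card hsub
    _ ≤ (Finset.univ : Finset (Fin p)).card := Finset.card_image_le
    _ = p := by simp

lemma cycA (hF : Function.Bijective F) (htrans : ∀ x y, ∃ k, F^[k] x = y) (x₀ : α) :
    Function.Bijective (fun k : Fin (Fintype.card α) => F^[(k:ℕ)] x₀) := by
  have hsurj : ∀ y, ∃ k, F^[k] x₀ = y := fun y => htrans x₀ y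
  have hinj : Function.Injective (fun k : Fin (Fintype.card α) => F^[(k:ℕ)] x₀) := by
    have haux : ∀ i j : Fin (Fintype.card α), (i:ℕ) ≤ (j:ℕ) →
        F^[(i:ℕ)] x₀ = F^[(j:ℕ)] x₀ → i = j := by
      intro i j hij h
      have h2 : F^[(i:ℕ)] (F^[(j:ℕ) - (i:ℕ)] x₀) = F^[(i:ℕ)] x₀ := by
        rw [← Function.iterate_add_apply, show (i:ℕ) + ((j:ℕ) - (i:ℕ)) = (j:ℕ) by omega, h]
      have h3 : F^[(j:ℕ) - (i:ℕ)] x₀ = x₀ := (hF.injective.iterate (i:ℕ)) h2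
      by_contra hne
      have hpos : 0 < (j:ℕ) - (i:ℕ) := by
        have : (i:ℕ) ≠ (j:ℕ) := fun hc => hne (Fin.ext hc)
        omega
      have := periodBound hpos h3 hsurj
      omega
    intro i j h
    rcases le_total (i:ℕ) (j:ℕ) with hij | hij
    · exact haux i j hij h
    · exact (haux j i hij h.symm).symm
  exact (Fintype.bijective_iff_injective_and_card _).mpr ⟨hinj, by simp⟩

lemma cycB (hF : Function.Bijective F) (htrans : ∀ x y, ∃ k, F^[k] x = y) (y : α) :
    F^[Fintype.card α] y = y := by
  obtain ⟨k, hk'⟩ := (cycA hF htrans y).surjective (F^[Fintype.card α] y)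
  have hk : F^[(k:ℕ)] y = F^[Fintype.card α] y := hk'
  rcases Nat.eq_zero_or_pos (k:ℕ) with h0 | hpos
  · rw [← hk, h0]; rfl
  · exfalso
    have h2 : F^[(k:ℕ)] (F^[Fintype.card α - (k:ℕ)] y) = F^[(k:ℕ)] y := by
      rw [← Function.iterate_add_apply,
        show (k:ℕ) + (Fintype.card α - (k:ℕ)) = Fintype.card α by omega, ← hk]
    have h3 := (hF.injective.iterate (k:ℕ)) h2
    have := periodBound (p := Fintype.card α - (k:ℕ)) (by omega) h3 (htrans y)
    omega

lemma notTransOfPeriod {m : ℕ} (hm : 0 < m) (hcard : m < Fintype.card α)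
    (hper : ∀ x, F^[m] x = x) : ¬(∀ x y, ∃ k, F^[k] x = y) := by
  intro htrans
  have : Nonempty α := Fintype.card_pos_iff.mp (by omega)
  obtain ⟨x₀⟩ := this
  have := periodBound hm (hper x₀) (htrans x₀)
  omega

end Cyc

lemma castEval (f : ℤ[X]) (m : ℕ) (a : ℤ) :
    ((f.eval a : ℤ) : ZMod m) = aeval ((a:ℤ) : ZMod m) f := by
  rw [aeval_def, eval₂_eq_eval_map]
  have := eval_intCast_map (Int.castRingHom (ZMod m)) f a
  simp only [algebraMap_int_eq]
  rw [this]; rfl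

lemma castIter (f : ℤ[X]) (m : ℕ) : ∀ (k : ℕ) (a : ℤ),
    (((fun a : ℤ => f.eval a)^[k] a : ℤ) : ZMod m)
      = (fun z : ZMod m => aeval z f)^[k] ((a:ℤ) : ZMod m) := by
  intro k
  induction k with
  | zero => intro a; rfl
  | succ k ih =>
    intro a
    rw [Function.iterate_succ_apply', Function.iterate_succ_apply']
    rw [castEval, ih]

lemma polyModEq (f : ℤ[X]) (m : ℕ) {a b : ℤ} (h : a ≡ b [ZMOD (m:ℤ)]) :
    f.eval a ≡ f.eval b [ZMOD (m:ℤ)] := by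
  have h' : ((a:ℤ) : ZMod m) = ((b:ℤ) : ZMod m) := by
    rwa [ZMod.intCast_eq_intCast_iff]
  rw [← ZMod.intCast_eq_intCast_iff, castEval, castEval, h']

lemma fibpar (f : ℤ[X]) (hf : Permutational2 f) (n : ℕ) (w : List ℤ) (hw : w.length = n) :
    (itSection 2 f w).eval 1 % 2 = ((itSection 2 f w).eval 0 + 1) % 2 := by
  set g := itSection 2 f w with hg
  set v := listVal w with hv
  set M : ℤ := 2^n with hM
  have hMpos : (0:ℤ) < M := by positivity
  have h0 := itSectionEval w f 0
  have h1 := itSectionEval w f 1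
  rw [hw] at h0 h1
  rw [mul_zero, add_zero] at h0
  rw [mul_one] at h1
  -- h0 : f.eval v = f.eval v % M + M * g.eval 0
  -- h1 : f.eval (v + M) = f.eval v % M + M * g.eval 1
  have hne : ¬ (f.eval v ≡ f.eval (v + M) [ZMOD ((2^(n+1) : ℕ) : ℤ)]) := by
    intro hcon
    have hinj := (hf (n+1) (by omega)).injective
    have hcast : ((v : ℤ) : ZMod (2^(n+1))) ≠ (((v + M) : ℤ) : ZMod (2^(n+1))) := by
      intro hc
      rw [ZMod.intCast_eq_intCast_iff] at hc
      have hd : ((2^(n+1):ℕ) : ℤ) ∣ (v + M) - v := hc.dvd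
      have : ((2^(n+1):ℕ) : ℤ) = 2 * M := by push_cast [hM]; ring
      rw [this] at hd
      have := Int.le_of_dvd hMpos (by simpa using hd)
      omega
    apply hcast
    apply hinj
    show aeval ((v : ℤ) : ZMod (2^(n+1))) f = aeval (((v+M) : ℤ) : ZMod (2^(n+1))) f
    rw [← castEval, ← castEval]
    exact_mod_cast (ZMod.intCast_eq_intCast_iff _ _ _).mpr hcon
  have key : g.eval 0 % 2 ≠ g.eval 1 % 2 := by
    intro heq
    apply hne
    have h2 : M * g.eval 0 ≡ M * g.eval 1 [ZMOD M*2] := Int.ModEq.mul_left' heq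
    have h3 : f.eval v ≡ f.eval (v+M) [ZMOD M*2] := by
      rw [h0, h1]
      exact Int.ModEq.add_left _ h2
    have : ((2^(n+1):ℕ) : ℤ) = M * 2 := by push_cast [hM]; ring
    rw [this]
    exact h3
  have e0 := Int.emod_nonneg (g.eval 0) (by norm_num : (2:ℤ) ≠ 0)
  have e1 := Int.emod_nonneg (g.eval 1) (by norm_num : (2:ℤ) ≠ 0)
  have e2 := Int.emod_lt_of_pos (g.eval 0) (by norm_num : (0:ℤ) < 2)
  have e3 := Int.emod_lt_of_pos (g.eval 1) (by norm_num : (0:ℤ) < 2)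
  omega


lemma ar2 (s h M : ℤ) (hM : 0 < M) (hs0 : 0 ≤ s) (hsM : s < M) :
    (s + M*h) % (2*M) = s + M*(h % 2) := by
  have h1 : M*(h % 2) ≡ M*h [ZMOD M*2] :=
    Int.ModEq.mul_left' (Int.emod_emod_of_dvd h dvd_rfl)
  have h1' : M*(h % 2) ≡ M*h [ZMOD 2*M] := by rwa [mul_comm M 2] at h1
  have h2 : (s + M*h) % (2*M) = (s + M*(h % 2)) % (2*M) :=
    (Int.ModEq.add_left s h1').symm
  have hb0 := Int.emod_nonneg h (by norm_num : (2:ℤ) ≠ 0)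
  have hb1 := Int.emod_lt_of_pos h (by norm_num : (0:ℤ) < 2)
  rw [h2]
  refine Int.emod_eq_of_lt (by nlinarith) (by nlinarith)

/-- the top bit of `x` at level `n` -/
def tbit (n : ℕ) (x : ℤ) : ℤ := (x % (2*2^n)) / 2^n

/-- constant term of the section attached to `x` at level `n` -/
noncomputable def cterm (f : ℤ[X]) (n : ℕ) (x : ℤ) : ℤ := (itSection 2 f (dig n x)).coeff 0

lemma tbit_range (n : ℕ) (x : ℤ) : tbit n x = 0 ∨ tbit n x = 1 := by
  have hM : (0:ℤ) < 2^n := by positivity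
  have h0 := Int.emod_nonneg x (by positivity : (2*2^n:ℤ) ≠ 0)
  have h1 := Int.emod_lt_of_pos x (by positivity : (0:ℤ) < 2*2^n)
  have t0 : 0 ≤ tbit n x := Int.ediv_nonneg h0 (le_of_lt hM)
  have t1 : tbit n x < 2 := by
    rw [tbit, Int.ediv_lt_iff_lt_mul hM]
    omega
  omega

lemma tdef (n : ℕ) (x : ℤ) : x % (2*2^n) = x % 2^n + 2^n * tbit n x := by
  have h1 : x % (2*2^n) % 2^n + 2^n * (x % (2*2^n) / 2^n) = x % (2*2^n) :=
    Int.emod_add_mul_ediv _ _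
  have h2 : x % (2*2^n) % 2^n = x % 2^n := Int.emod_emod_of_dvd x ⟨2, by ring⟩
  rw [tbit, ← h2]
  exact h1.symm

lemma tstep (f : ℤ[X]) (hf : Permutational2 f) (n : ℕ) (a : ℤ) :
    tbit n (f.eval a) = (cterm f n a + tbit n a) % 2 := by
  set M : ℤ := 2^n with hM
  have hMpos : (0:ℤ) < M := by positivity
  set w := dig n a with hwdef
  set g := itSection 2 f w with hg
  have hlen : w.length = n := digLen n a
  have hv : listVal w = a % M := valDig n a
  -- a ≡ listVal w + M * tbit n a  [ZMOD 2M]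
  have h1 : a ≡ listVal w + M * tbit n a [ZMOD (2*M)] := by
    have : a % (2*M) = listVal w + M * tbit n a := by rw [hv, hM]; exact tdef n a
    have h' : a % (2*M) % (2*M) = a % (2*M) := Int.emod_emod_of_dvd a dvd_rfl
    show a % (2*M) = (listVal w + M * tbit n a) % (2*M)
    rw [← this]
    conv_lhs => rw [← h']
  -- f.eval respects mod 2M
  have h2 : f.eval a ≡ f.eval (listVal w + M * tbit n a) [ZMOD (2*M)] := by
    have hcast : ((2^(n+1):ℕ) : ℤ) = 2*M := by push_cast [hM]; ring
    have := polyModEq f (2^(n+1)) (a := a) (b := listVal w + M * tbit n a) (by rwa [hcast])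
    rwa [hcast] at this
  have h3 : f.eval (listVal w + M * tbit n a)
      = f.eval (listVal w) % M + M * g.eval (tbit n a) := by
    have := itSectionEval w f (tbit n a)
    rwa [hlen, ← hM] at this
  -- parity of g.eval (tbit n a)
  have h4 : g.eval (tbit n a) % 2 = (g.eval 0 + tbit n a) % 2 := by
    rcases tbit_range n a with ht | ht
    · rw [ht]; norm_num
    · rw [ht]; exact fibpar f hf n w hlen
  -- compute the emod of f.eval a
  have h5 : f.eval a % (2*M) = f.eval (listVal w) % M + M * ((g.eval 0 + tbit n a) % 2) := by
    have hs0 := Int.emod_nonneg (f.eval (listVal w)) (by omega : M ≠ 0)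
    have hs1 := Int.emod_lt_of_pos (f.eval (listVal w)) hMpos
    calc f.eval a % (2*M) = (f.eval (listVal w) % M + M * g.eval (tbit n a)) % (2*M) := by
          rw [← h3]; exact h2
      _ = f.eval (listVal w) % M + M * (g.eval (tbit n a) % 2) := ar2 _ _ _ hMpos hs0 hs1
      _ = f.eval (listVal w) % M + M * ((g.eval 0 + tbit n a) % 2) := by rw [h4]
  -- extract the top bit
  have hs0 := Int.emod_nonneg (f.eval (listVal w)) (by omega : M ≠ 0)
  have hs1 := Int.emod_lt_of_pos (f.eval (listVal w)) hMpos
  have h6 : tbit n (f.eval a) = (g.eval 0 + tbit n a) % 2 := by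
    rw [tbit, ← hM, h5, Int.add_mul_ediv_left _ _ (by omega : M ≠ 0),
      Int.ediv_eq_zero_of_lt hs0 hs1, zero_add]
  rw [h6, cterm, ← hwdef, ← hg, Polynomial.coeff_zero_eq_eval_zero, add_comm]

lemma tbitsum (f : ℤ[X]) (hf : Permutational2 f) (n : ℕ) (a : ℤ) (k : ℕ) :
    tbit n ((fun a : ℤ => f.eval a)^[k] a) % 2
      = (tbit n a + ∑ j ∈ Finset.range k, cterm f n ((fun a : ℤ => f.eval a)^[j] a)) % 2 := by
  induction k with
  | zero => simp
  | succ k ih =>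
    rw [Function.iterate_succ_apply', Finset.sum_range_succ]
    have h1 := tstep f hf n ((fun a : ℤ => f.eval a)^[k] a)
    omega


section
variable (f : ℤ[X]) (n : ℕ)

lemma valBound (w : List ℤ) (hw : ∀ x ∈ w, x = 0 ∨ x = 1) :
    0 ≤ listVal w ∧ listVal w < 2^w.length := by
  have h := digVal w hw
  have h2 := valDig w.length (listVal w)
  rw [h] at h2
  have h3 := Int.emod_nonneg (listVal w) (by positivity : (2:ℤ)^w.length ≠ 0)
  have h4 := Int.emod_lt_of_pos (listVal w) (by positivity : (0:ℤ) < 2^w.length)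
  omega

def wordOf (v : Fin n → Fin 2) : List ℤ := List.map (fun i : Fin 2 => ((i:ℕ):ℤ)) (List.ofFn v)

lemma wordOf_mem (v : Fin n → Fin 2) : ∀ x ∈ wordOf n v, x = 0 ∨ x = 1 := by
  intro x hx
  simp only [wordOf, List.mem_map] at hx
  obtain ⟨i, _, rfl⟩ := hx
  have h2 := i.isLt
  omega

lemma wordOf_len (v : Fin n → Fin 2) : (wordOf n v).length = n := by rw [wordOf, List.length_map, List.length_ofFn]

lemma ctermCast [NeZero (2^n)] (b : ℤ) :
    cterm f n (((b : ZMod (2^n)).val : ℤ)) = cterm f n b := by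
  have h1 : (((b : ZMod (2^n)).val : ℤ)) = b % ((2^n : ℕ) : ℤ) := ZMod.val_intCast b
  have h2 : ((2^n : ℕ) : ℤ) = 2^n := by push_cast; ring
  rw [h1, h2, cterm, cterm, digCongr n _ _ (Int.emod_emod_of_dvd b dvd_rfl)]

lemma stepB [NeZero (2^n)] :
    ∑ v : Fin n → Fin 2, (itSection 2 f (wordOf n v)).coeff 0
      = ∑ z : ZMod (2^n), cterm f n ((z.val : ℤ)) := by
  have h2 : ((2^n : ℕ) : ℤ) = 2^n := by push_cast; ring
  have hval : ∀ v : Fin n → Fin 2, listVal (wordOf n v) % (2:ℤ)^n = listVal (wordOf n v) := by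
    intro v
    obtain ⟨hb0, hb1⟩ := valBound (wordOf n v) (wordOf_mem n v)
    rw [wordOf_len] at hb1
    exact Int.emod_eq_of_lt hb0 hb1
  set q : (Fin n → Fin 2) → ZMod (2^n) := fun v => ((listVal (wordOf n v) : ℤ) : ZMod (2^n))
    with hq
  have hqval : ∀ v, (((q v).val : ℤ)) = listVal (wordOf n v) := by
    intro v
    rw [hq]
    rw [ZMod.val_intCast, h2, hval v]
  have hinj : Function.Injective q := by
    intro v v' h
    have := congrArg (fun z : ZMod (2^n) => (z.val : ℤ)) h
    rw [hqval v, hqval v'] at this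
    have hw : wordOf n v = wordOf n v' := by
      have d1 := digVal (wordOf n v) (wordOf_mem n v)
      have d2 := digVal (wordOf n v') (wordOf_mem n v')
      rw [wordOf_len] at d1 d2
      rw [← d1, ← d2, this]
    have hofn : List.ofFn v = List.ofFn v' := by
      have hinj2 : Function.Injective (fun i : Fin 2 => ((i:ℕ):ℤ)) := by
        intro i j hij
        exact Fin.ext (by exact_mod_cast (show ((i:ℕ):ℤ) = ((j:ℕ):ℤ) from hij))
      simp only [wordOf] at hw
      exact List.map_injective_iff.mpr hinj2 hw
    exact List.ofFn_injective hofn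
  have hbij : Function.Bijective q := by
    refine (Fintype.bijective_iff_injective_and_card q).mpr ⟨hinj, ?_⟩
    simp [ZMod.card]
  refine Fintype.sum_bijective q hbij _ _ ?_
  intro v
  have : cterm f n (((q v).val : ℤ)) = (itSection 2 f (wordOf n v)).coeff 0 := by
    rw [hqval v, cterm]
    congr 2
    have := digVal (wordOf n v) (wordOf_mem n v)
    rwa [wordOf_len] at this
  rw [← this]

lemma stepA [NeZero (2^n)]
    (hbij : Function.Bijective (fun x : ZMod (2^n) => aeval x f))
    (htr : ∀ x y : ZMod (2^n), ∃ k, (fun z : ZMod (2^n) => aeval z f)^[k] x = y) (a : ℤ) :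
    ∑ j ∈ Finset.range (2^n), cterm f n ((fun a : ℤ => f.eval a)^[j] a)
      = ∑ z : ZMod (2^n), cterm f n ((z.val : ℤ)) := by
  have hcard : Fintype.card (ZMod (2^n)) = 2^n := ZMod.card _
  set F : ZMod (2^n) → ZMod (2^n) := fun z => aeval z f with hF
  set e : Fin (2^n) → ZMod (2^n) := fun k => F^[(k:ℕ)] ((a:ℤ) : ZMod (2^n)) with he
  have hebij : Function.Bijective e := by
    refine (Fintype.bijective_iff_injective_and_card e).mpr ⟨?_, by simp [hcard]⟩
    intro i j h
    have hc := (cycA hbij htr ((a:ℤ) : ZMod (2^n))).injective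
      (a₁ := ⟨(i:ℕ), i.isLt.trans_eq hcard.symm⟩) (a₂ := ⟨(j:ℕ), j.isLt.trans_eq hcard.symm⟩) h
    have hval := congrArg (Fin.val (n := Fintype.card (ZMod (2^n)))) hc
    exact Fin.ext hval
  have hsum : ∑ k : Fin (2^n), cterm f n (((e k).val : ℤ)) = ∑ z : ZMod (2^n), cterm f n ((z.val : ℤ)) :=
    Fintype.sum_bijective e hebij _ _ (fun k => rfl)
  rw [← hsum, ← Fin.sum_univ_eq_sum_range]
  refine Finset.sum_congr rfl ?_
  intro k _
  have h1 : e k = (((fun a : ℤ => f.eval a)^[(k:ℕ)] a : ℤ) : ZMod (2^n)) := (castIter f _ _ _).symm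
  rw [h1, ctermCast]

lemma mainInt (hf : Permutational2 f) [NeZero (2^n)]
    (hbij : Function.Bijective (fun x : ZMod (2^n) => aeval x f))
    (htr : ∀ x y : ZMod (2^n), ∃ k, (fun z : ZMod (2^n) => aeval z f)^[k] x = y) (a : ℤ) :
    (fun a : ℤ => f.eval a)^[2^n] a
      ≡ a + 2^n * (∑ v : Fin n → Fin 2, (itSection 2 f (wordOf n v)).coeff 0)
        [ZMOD (2*2^n : ℤ)] := by
  set M : ℤ := 2^n with hM
  have hMpos : (0:ℤ) < M := by positivity
  set S : ℤ := ∑ v : Fin n → Fin 2, (itSection 2 f (wordOf n v)).coeff 0 with hS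
  set b : ℤ := (fun a : ℤ => f.eval a)^[2^n] a with hb
  -- residue part
  have hres : b % M = a % M := by
    have h1 : ((b : ℤ) : ZMod (2^n)) = ((a : ℤ) : ZMod (2^n)) := by
      rw [hb, castIter]
      have := cycB hbij htr ((a:ℤ) : ZMod (2^n))
      rwa [ZMod.card] at this
    rw [ZMod.intCast_eq_intCast_iff] at h1
    have h2 : ((2^n : ℕ) : ℤ) = M := by push_cast [hM]; ring
    rw [h2] at h1
    exact h1
  -- parity part
  have hpar : tbit n b % 2 = (tbit n a + S) % 2 := by
    have h1 := tbitsum f hf n a (2^n)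
    rw [stepA f n hbij htr a, ← stepB] at h1
    exact h1
  -- reconstruct
  have t1 : b % (2*M) = b % M + M * tbit n b := tdef n b
  have t2 : a % (2*M) = a % M + M * tbit n a := tdef n a
  have h1 : a % M + M * tbit n b ≡ b [ZMOD 2*M] := by
    have hx : b % (2*M) = a % M + M * tbit n b := by rw [t1, hres]
    show (a % M + M * tbit n b) % (2*M) = b % (2*M)
    rw [← hx]
    exact Int.emod_emod_of_dvd b dvd_rfl
  have h2 : M * (tbit n a + S) ≡ M * tbit n b [ZMOD 2*M] := by
    have hm : tbit n a + S ≡ tbit n b [ZMOD 2] := hpar.symm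
    have := Int.ModEq.mul_left' (c := M) hm
    rwa [mul_comm M 2] at this
  have h3 : a ≡ a % M + M * tbit n a [ZMOD 2*M] := by
    show a % (2*M) = (a % M + M * tbit n a) % (2*M)
    rw [← t2]
    exact (Int.emod_emod_of_dvd a dvd_rfl).symm
  calc b ≡ a % M + M * tbit n b [ZMOD 2*M] := h1.symm
    _ ≡ a % M + M * (tbit n a + S) [ZMOD 2*M] := Int.ModEq.add_left _ h2.symm
    _ = (a % M + M * tbit n a) + M * S := by ring
    _ ≡ a + M * S [ZMOD 2*M] := Int.ModEq.add_right _ h3.symm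

end



noncomputable def SS (f : ℤ[X]) (n : ℕ) : ℤ :=
  ∑ v : Fin n → Fin 2, (itSection 2 f (wordOf n v)).coeff 0

lemma keyStep (f : ℤ[X]) (hf : Permutational2 f) (n : ℕ)
    (hbij : Function.Bijective (fun x : ZMod (2^n) => aeval x f))
    (htr : TransitiveMod f (2^n)) :
    TransitiveMod f (2^(n+1)) ↔ Odd (SS f n) := by
  haveI : NeZero ((2:ℕ)^n) := ⟨by positivity⟩
  haveI : NeZero ((2:ℕ)^(n+1)) := ⟨by positivity⟩
  have hcast : (((2:ℕ)^(n+1) : ℕ) : ℤ) = 2*2^n := by push_cast; ring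
  have hmain := mainInt f n hf hbij htr
  have hiter : ∀ (a : ℤ), (fun z : ZMod (2^(n+1)) => aeval z f)^[2^n] ((a:ℤ) : ZMod (2^(n+1)))
      = (((fun a : ℤ => f.eval a)^[2^n] a : ℤ) : ZMod (2^(n+1))) := fun a => (castIter f _ _ _).symm
  have hmain' : ∀ (a : ℤ), (fun z : ZMod (2^(n+1)) => aeval z f)^[2^n] ((a:ℤ) : ZMod (2^(n+1)))
      = (((a + 2^n * SS f n) : ℤ) : ZMod (2^(n+1))) := by
    intro a
    rw [hiter a]
    rw [ZMod.intCast_eq_intCast_iff]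
    have := hmain a
    rw [← hcast] at this
    exact this
  constructor
  · -- transitive at level n+1 ⇒ odd sum
    intro htrN
    by_contra hodd
    obtain ⟨s, hs⟩ := Int.not_odd_iff_even.mp hodd
    have hper : ∀ x : ZMod (2^(n+1)), (fun z : ZMod (2^(n+1)) => aeval z f)^[2^n] x = x := by
      intro x
      obtain ⟨a, rfl⟩ := ZMod.intCast_surjective (n := 2^(n+1)) x
      rw [hmain' a]
      have : (a + 2^n * SS f n) = a + ((2^(n+1) : ℕ) : ℤ) * s := by
        rw [hcast, hs]; ring
      rw [this, Int.cast_add, Int.cast_mul, Int.cast_natCast, ZMod.natCast_self,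
        zero_mul, add_zero]
    have hnt := notTransOfPeriod (F := fun z : ZMod (2^(n+1)) => aeval z f)
      (m := 2^n) (by positivity) (by rw [ZMod.card]; exact Nat.pow_lt_pow_right (by omega) (by omega)) hper
    exact hnt htrN
  · -- odd sum ⇒ transitive at level n+1
    intro hodd
    obtain ⟨s, hs⟩ := hodd
    have hshift : ∀ x : ZMod (2^(n+1)), (fun z : ZMod (2^(n+1)) => aeval z f)^[2^n] x
        = x + (((2:ℤ)^n : ℤ) : ZMod (2^(n+1))) := by
      intro x
      obtain ⟨a, rfl⟩ := ZMod.intCast_surjective (n := 2^(n+1)) x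
      rw [hmain' a]
      have : (a + 2^n * SS f n) = (a + 2^n) + ((2^(n+1) : ℕ) : ℤ) * s := by
        rw [hcast, hs]; ring
      rw [this, Int.cast_add, Int.cast_mul, Int.cast_natCast, ZMod.natCast_self,
        zero_mul, add_zero, Int.cast_add]
    intro x y
    obtain ⟨a, rfl⟩ := ZMod.intCast_surjective (n := 2^(n+1)) x
    obtain ⟨b, rfl⟩ := ZMod.intCast_surjective (n := 2^(n+1)) y
    obtain ⟨j, hj⟩ := htr ((a:ℤ) : ZMod (2^n)) ((b:ℤ) : ZMod (2^n))
    rw [← castIter, ZMod.intCast_eq_intCast_iff] at hj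
    obtain ⟨q, hq⟩ : ∃ q, b = (fun a : ℤ => f.eval a)^[j] a + 2^n * q := by
      have hd := hj.dvd
      have h2 : (((2:ℕ)^n : ℕ) : ℤ) = 2^n := by push_cast; ring
      rw [h2] at hd
      obtain ⟨q, hq⟩ := hd
      exact ⟨q, by linarith⟩
    rcases Int.even_or_odd q with ⟨q', hq'⟩ | ⟨q', hq'⟩
    · refine ⟨j, ?_⟩
      rw [show (fun z : ZMod (2^(n+1)) => aeval z f)^[j] ((a:ℤ) : ZMod (2^(n+1)))
          = (((fun a : ℤ => f.eval a)^[j] a : ℤ) : ZMod (2^(n+1))) from (castIter f _ _ _).symm]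
      rw [ZMod.intCast_eq_intCast_iff]
      have hb : b = (fun a : ℤ => f.eval a)^[j] a + ((2^(n+1) : ℕ) : ℤ) * q' := by
        rw [hcast, hq, hq']; ring
      rw [hb]
      exact (Int.modEq_iff_dvd.mpr ⟨-q', by ring⟩).symm
    · refine ⟨2^n + j, ?_⟩
      rw [Function.iterate_add_apply, hshift]
      rw [show (fun z : ZMod (2^(n+1)) => aeval z f)^[j] ((a:ℤ) : ZMod (2^(n+1)))
          = (((fun a : ℤ => f.eval a)^[j] a : ℤ) : ZMod (2^(n+1))) from (castIter f _ _ _).symm]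
      rw [show (((fun a : ℤ => f.eval a)^[j] a : ℤ) : ZMod (2^(n+1))) + (((2:ℤ)^n : ℤ) : ZMod (2^(n+1)))
          = ((((fun a : ℤ => f.eval a)^[j] a + 2^n : ℤ)) : ZMod (2^(n+1))) by push_cast; ring]
      rw [ZMod.intCast_eq_intCast_iff]
      have hb : b = ((fun a : ℤ => f.eval a)^[j] a + 2^n) + ((2^(n+1) : ℕ) : ℤ) * q' := by
        rw [hcast, hq, hq']; ring
      rw [hb]
      exact (Int.modEq_iff_dvd.mpr ⟨-q', by ring⟩).symm


lemma bij0 (f : ℤ[X]) : Function.Bijective (fun x : ZMod (2^0) => aeval x f) := by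
  haveI : Subsingleton (ZMod (2^0)) := by rw [pow_zero]; infer_instance
  constructor
  · intro a b _; exact Subsingleton.elim a b
  · intro y; exact ⟨y, Subsingleton.elim _ _⟩

lemma trans0 (f : ℤ[X]) : TransitiveMod f (2^0) := by
  haveI : Subsingleton (ZMod (2^0)) := by rw [pow_zero]; infer_instance
  intro x y; exact ⟨0, Subsingleton.elim _ _⟩

lemma listCoe (l : List (Fin 2)) :
    List.map (fun i : ℕ => (i:ℤ)) ((do let a ← l; pure ((a:ℕ))) : List ℕ)
      = List.map (fun i : Fin 2 => ((i:ℕ):ℤ)) l := by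
  induction l with
  | nil => rfl
  | cons x l ih => simpa using ih


/-- A `2`-permutational polynomial `f` is transitive mod `2 ^ n` for every `n ≥ 1` if and
only if, for every level `n ≥ 0`, the sum over all words `w` of length `n` over `{0,1}` of
the constant coefficients of the iterated sections `f|_w` is odd. -/
theorem level_transitive_iff_odd_constant_terms (f : ℤ[X]) (hf : Permutational2 f) :
    (∀ n : ℕ, 1 ≤ n → TransitiveMod f (2 ^ n)) ↔
      (∀ n : ℕ, Odd (∑ v : Fin n → Fin 2,
        (itSection 2 f ((List.ofFn v).map (fun i => ((i : ℕ) : ℤ)))).coeff 0)) := by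
  have sumEq : ∀ n : ℕ, (∑ v : Fin n → Fin 2,
      (itSection 2 f ((List.ofFn v).map (fun i => ((i : ℕ) : ℤ)))).coeff 0) = SS f n := by
    intro n
    refine Finset.sum_congr rfl fun v _ => ?_
    rw [show (List.ofFn v).map (fun i => ((i : ℕ) : ℤ)) = wordOf n v from listCoe _]
  have hbij : ∀ n : ℕ, Function.Bijective (fun x : ZMod (2^n) => aeval x f) := by
    intro n
    cases n with
    | zero => exact bij0 f
    | succ m => exact hf (m+1) (by omega)
  constructor
  · intro h n
    have htr : TransitiveMod f (2^n) := by
      cases n with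
      | zero => exact trans0 f
      | succ m => exact h (m+1) (by omega)
    rw [sumEq]
    exact (keyStep f hf n (hbij n) htr).mp (h (n+1) (by omega))
  · intro h
    have key : ∀ m : ℕ, TransitiveMod f (2^m) := by
      intro m
      induction m with
      | zero => exact trans0 f
      | succ m ih =>
        refine (keyStep f hf m (hbij m) ih).mpr ?_
        rw [← sumEq]
        exact h m
    intro n _
    exact key n
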